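/- Let F : L²(Ω, ℝ) → ℝ be law-invariant and Fréchet differentiable at ξ. Then the gradient DF(ξ) is measurable with respect to the sigma-algebra generated by ξ, up to null sets, provided the probability space is atomless. Equivalently, E[DF(ξ) | σ(ξ)] = DF(ξ) a.s. -/

import Mathlib

/-!
If `ζ` is a.e. constant on disjoint sets `B` and `C` of equal measure, perturbing it by `+ε` on `B`
and `-ε` on `C` or the other way round gives random variables with the same law, so law invariance
and differentiability force `∫_B DF(ζ) = ∫_C DF(ζ)`. In an atomless space any two sets of positive
measure contain subsets of equal positive measure (Sierpiński), hence `DF(ζ)` is a.e. constant on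
every level set of `ζ`. Taking for `ζ` the discretisations `⌊(n + 1) ξ⌋ / (n + 1)` of `ξ`, whose
level sets are `σ(ξ)`-measurable, makes `DF(ζ)` `σ(ξ)`-measurable. These `ζ` converge to `ξ` in `L²`,
`DF` is continuous, and `σ(ξ)`-measurable classes form a closed subset of `L²`, so `DF(ξ)` is
`σ(ξ)`-measurable.
-/

open MeasureTheory Filter Topology
open scoped ENNReal

lemma abs_floor_mul_div_sub_le (x : ℝ) {t : ℝ} (ht : 0 < t) : |⌊x * t⌋ / t - x| ≤ t⁻¹ := by
  have hfract : ⌊x * t⌋ / t - x = -Int.fract (x * t) / t := by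
    rw [Int.fract]
    field_simp
    ring
  rw [hfract, abs_div, abs_neg, abs_of_nonneg (Int.fract_nonneg _), abs_of_pos ht, ← one_div]
  gcongr
  exact (Int.fract_lt_one _).le

namespace MeasureTheory

open Set

variable {Ω : Type*} {mΩ : MeasurableSpace Ω} {μ : Measure Ω}

-- Stronger than `MeasureTheory.NoAtoms`, which only asks singletons to be null.
def Measure.IsAtomless (μ : Measure Ω) : Prop :=
  ∀ s, MeasurableSet s → 0 < μ s → ∃ t ⊆ s, MeasurableSet t ∧ 0 < μ t ∧ μ t < μ s

lemma Measure.exists_subset_measure_le_forall_le_two_mul (μ : Measure Ω) (s : Set Ω)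
    {b : ℝ≥0∞} (hb : b ≠ ∞) :
    ∃ u ⊆ s, MeasurableSet u ∧ μ u ≤ b ∧
      ∀ v ⊆ s, MeasurableSet v → μ v ≤ b → μ v ≤ 2 * μ u := by
  set M := sSup (μ '' {v | v ⊆ s ∧ MeasurableSet v ∧ μ v ≤ b})
  have hle_M {v : Set Ω} (hvs : v ⊆ s) (hv : MeasurableSet v) (hvb : μ v ≤ b) : μ v ≤ M :=
    le_sSup ⟨v, ⟨hvs, hv, hvb⟩, rfl⟩
  rcases eq_or_ne M 0 with hM | hM
  · refine ⟨∅, empty_subset s, .empty, by simp, fun v hvs hv hvb => ?_⟩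
    simpa [hM] using hle_M hvs hv hvb
  have hM_top : M ≠ ∞ := ne_top_of_le_ne_top hb (sSup_le (by rintro _ ⟨v, hv, rfl⟩; exact hv.2.2))
  obtain ⟨_, ⟨u, ⟨hus, hu, hub⟩, rfl⟩, hMu⟩ := lt_sSup_iff.mp (ENNReal.half_lt_self hM hM_top)
  refine ⟨u, hus, hu, hub, fun v hvs hv hvb => ?_⟩
  calc μ v ≤ M := hle_M hvs hv hvb
    _ = 2 * (M / 2) := (ENNReal.mul_div_cancel two_ne_zero ENNReal.ofNat_ne_top).symm
    _ ≤ 2 * μ u := by gcongr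

namespace Measure.IsAtomless

variable [IsFiniteMeasure μ]

lemma exists_subset_measure_pos_le_half (hμ : μ.IsAtomless) {s : Set Ω} (hs : MeasurableSet s)
    (hpos : 0 < μ s) : ∃ t ⊆ s, MeasurableSet t ∧ 0 < μ t ∧ μ t ≤ μ s / 2 := by
  obtain ⟨t, hts, ht, htpos, hlt⟩ := hμ s hs hpos
  rcases le_or_gt (μ t) (μ s / 2) with hle | hgt
  · exact ⟨t, hts, ht, htpos, hle⟩
  have hdiff : μ (s \ t) = μ s - μ t := measure_sdiff hts ht.nullMeasurableSet (measure_ne_top μ t)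
  refine ⟨s \ t, sdiff_subset, hs.diff ht, hdiff ▸ tsub_pos_of_lt hlt, ?_⟩
  calc μ (s \ t) = μ s - μ t := hdiff
    _ ≤ μ s - μ s / 2 := tsub_le_tsub_left hgt.le _
    _ = μ s / 2 := ENNReal.sub_half (measure_ne_top μ s)

lemma exists_subset_measure_pos_le (hμ : μ.IsAtomless) {s : Set Ω} (hs : MeasurableSet s)
    (hpos : 0 < μ s) {δ : ℝ≥0∞} (hδ : 0 < δ) : ∃ t ⊆ s, MeasurableSet t ∧ 0 < μ t ∧ μ t ≤ δ := by
  have halving (n : ℕ) : ∃ t ⊆ s, MeasurableSet t ∧ 0 < μ t ∧ μ t ≤ μ s * 2⁻¹ ^ n := by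
    induction n with
    | zero => exact ⟨s, subset_rfl, hs, hpos, by simp⟩
    | succ n ih =>
      obtain ⟨t, hts, ht, htpos, htle⟩ := ih
      obtain ⟨u, hut, hu, hupos, hule⟩ := hμ.exists_subset_measure_pos_le_half ht htpos
      refine ⟨u, hut.trans hts, hu, hupos, ?_⟩
      calc μ u ≤ μ t * 2⁻¹ := by rwa [← div_eq_mul_inv]
        _ ≤ μ s * 2⁻¹ ^ n * 2⁻¹ := by gcongr
        _ = μ s * 2⁻¹ ^ (n + 1) := by rw [pow_succ, mul_assoc]
  obtain ⟨n, hn⟩ := ENNReal.exists_inv_two_pow_lt (a := δ / μ s)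
    (ENNReal.div_pos hδ.ne' (measure_ne_top μ s)).ne'
  obtain ⟨t, hts, ht, htpos, htle⟩ := halving n
  refine ⟨t, hts, ht, htpos, ?_⟩
  calc μ t ≤ μ s * 2⁻¹ ^ n := htle
    _ ≤ μ s * (δ / μ s) := by gcongr
    _ ≤ δ := ENNReal.mul_div_le

theorem exists_subset_measure_eq (hμ : μ.IsAtomless) {s : Set Ω} (hs : MeasurableSet s)
    {r : ℝ≥0∞} (hr : r ≤ μ s) : ∃ t ⊆ s, MeasurableSet t ∧ μ t = r := by
  have hr_top : r ≠ ∞ := ne_top_of_le_ne_top (measure_ne_top μ s) hr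
  choose! U hUs hU hUb hUmax using fun (s' : Set Ω) (b : ℝ≥0∞) (hb : b ≠ ∞) =>
    μ.exists_subset_measure_le_forall_le_two_mul s' hb
  -- Greedy exhaustion: each step adds at least half of what could still be added.
  let T : ℕ → Set Ω := fun n => Nat.rec ∅ (fun _ t => t ∪ U (s \ t) (r - μ t)) n
  have hb (n : ℕ) : r - μ (T n) ≠ ∞ := ENNReal.sub_ne_top hr_top
  have hT_succ (n : ℕ) : μ (T (n + 1)) = μ (T n) + μ (U (s \ T n) (r - μ (T n))) :=
    measure_union (disjoint_sdiff_self_right.mono_right (hUs _ _ (hb n))) (hU _ _ (hb n))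
  have hT (n : ℕ) : T n ⊆ s ∧ MeasurableSet (T n) ∧ μ (T n) ≤ r := by
    induction n with
    | zero => exact ⟨empty_subset s, .empty, by simp [T]⟩
    | succ n ih =>
      obtain ⟨hTs, hTm, hTr⟩ := ih
      refine ⟨union_subset hTs ((hUs _ _ (hb n)).trans sdiff_subset), hTm.union (hU _ _ (hb n)),
        ?_⟩
      calc μ (T (n + 1)) = μ (T n) + μ (U (s \ T n) (r - μ (T n))) := hT_succ n
        _ ≤ μ (T n) + (r - μ (T n)) := by gcongr; exact hUb _ _ (hb n)
        _ = r := add_tsub_cancel_of_le hTr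
  have hT_mono : Monotone T := monotone_nat_of_le_succ fun n => subset_union_left
  have hT_sup : μ (⋃ n, T n) ≤ r := by
    rw [hT_mono.measure_iUnion]
    exact iSup_le fun n => (hT n).2.2
  refine ⟨⋃ n, T n, iUnion_subset fun n => (hT n).1, .iUnion fun n => (hT n).2.1, ?_⟩
  by_contra hne
  have hlt : μ (⋃ n, T n) < r := lt_of_le_of_ne hT_sup hne
  have hrest : 0 < μ (s \ ⋃ n, T n) :=
    (tsub_pos_of_lt (hlt.trans_le hr)).trans_le le_measure_sdiff
  obtain ⟨v, hvs, hv, hvpos, hvle⟩ := hμ.exists_subset_measure_pos_le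
    (hs.diff (.iUnion fun n => (hT n).2.1)) hrest (tsub_pos_of_lt hlt)
  have hv_step (n : ℕ) : μ v ≤ 2 * μ (U (s \ T n) (r - μ (T n))) :=
    hUmax _ _ (hb n) v (hvs.trans (sdiff_subset_sdiff_right (subset_iUnion T n))) hv
      (hvle.trans (tsub_le_tsub_left (measure_mono (subset_iUnion T n)) r))
  have hgrowth (n : ℕ) : n * μ v ≤ 2 * μ (T n) := by
    induction n with
    | zero => simp
    | succ n ih =>
      rw [hT_succ, mul_add, Nat.cast_succ, add_mul, one_mul]
      exact add_le_add ih (hv_step n)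
  have h2r : 2 * r ≠ ∞ := ENNReal.mul_ne_top ENNReal.ofNat_ne_top hr_top
  obtain ⟨n, hn⟩ := ENNReal.exists_nat_mul_gt hvpos.ne' h2r
  exact (hn.trans_le (hgrowth n)).not_ge (by gcongr; exact (hT n).2.2)

lemma exists_subsets_measure_eq_pos (hμ : μ.IsAtomless) {P Q : Set Ω} (hP : MeasurableSet P)
    (hQ : MeasurableSet Q) (hP₀ : 0 < μ P) (hQ₀ : 0 < μ Q) :
    ∃ B ⊆ P, ∃ C ⊆ Q, MeasurableSet B ∧ MeasurableSet C ∧ 0 < μ B ∧ μ B = μ C := by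
  obtain ⟨B, hBP, hB, hBμ⟩ := hμ.exists_subset_measure_eq hP (min_le_left (μ P) (μ Q))
  obtain ⟨C, hCQ, hC, hCμ⟩ := hμ.exists_subset_measure_eq hQ (min_le_right (μ P) (μ Q))
  exact ⟨B, hBP, C, hCQ, hB, hC, hBμ ▸ lt_min hP₀ hQ₀, hBμ.trans hCμ.symm⟩

variable {A : Set Ω} {Z : Ω → ℝ}

lemma ae_le_or_ae_ge_of_setIntegral_eq (hμ : μ.IsAtomless) (hA : MeasurableSet A)
    (hZm : Measurable Z) (hZ : IntegrableOn Z A μ)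
    (H : ∀ B ⊆ A, ∀ C ⊆ A, MeasurableSet B → MeasurableSet C → Disjoint B C → μ B = μ C →
      ∫ ω in B, Z ω ∂μ = ∫ ω in C, Z ω ∂μ) (q : ℝ) :
    (∀ᵐ ω ∂μ.restrict A, q ≤ Z ω) ∨ ∀ᵐ ω ∂μ.restrict A, Z ω ≤ q := by
  by_contra! h
  simp only [frequently_ae_iff] at h
  rw [Measure.restrict_apply (measurableSet_lt hZm measurable_const),
    Measure.restrict_apply (measurableSet_lt measurable_const hZm)] at h
  obtain ⟨B, hBP, C, hCQ, hB, hC, hBpos, hBC⟩ := hμ.exists_subsets_measure_eq_pos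
    ((measurableSet_lt measurable_const hZm).inter hA)
    ((measurableSet_lt hZm measurable_const).inter hA)
    (pos_iff_ne_zero.2 h.2) (pos_iff_ne_zero.2 h.1)
  have hBC_disj : Disjoint B C := disjoint_left.2 fun ω hωB hωC =>
    lt_asymm (a := q) (hBP hωB).1 (hCQ hωC).1
  have hBA : B ⊆ A := hBP.trans inter_subset_right
  have hCA : C ⊆ A := hCQ.trans inter_subset_right
  have hint := H B hBA C hCA hB hC hBC_disj hBC
  have hZB : IntegrableOn Z B μ := hZ.mono_set hBA
  have hZC : IntegrableOn Z C μ := hZ.mono_set hCA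
  have hB_gt : q * μ.real B < ∫ ω in B, Z ω ∂μ := by
    have : 0 < ∫ ω in B, (Z ω - q) ∂μ := by
      rw [setIntegral_pos_iff_support_of_nonneg_ae]
      · exact hBpos.trans_le (measure_mono fun ω hω => ⟨sub_ne_zero.2 (hBP hω).1.ne', hω⟩)
      · exact (ae_restrict_mem hB).mono fun ω hω => sub_nonneg.2 (hBP hω).1.le
      · exact hZB.sub (integrableOn_const (measure_ne_top μ B))
    rwa [integral_sub hZB (integrableOn_const (measure_ne_top μ B)), setIntegral_const,
      smul_eq_mul, sub_pos, mul_comm] at this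
  have hC_le : ∫ ω in C, Z ω ∂μ ≤ q * μ.real C := by
    have := setIntegral_mono_on hZC (integrableOn_const (measure_ne_top μ C)) hC
      fun ω hω => (hCQ hω).1.le
    rwa [setIntegral_const, smul_eq_mul, mul_comm] at this
  rw [measureReal_def, hBC, ← measureReal_def] at hB_gt
  linarith

theorem ae_eq_setAverage_of_setIntegral_eq (hμ : μ.IsAtomless) (hA : MeasurableSet A)
    (hZm : Measurable Z) (hZ : IntegrableOn Z A μ)
    (H : ∀ B ⊆ A, ∀ C ⊆ A, MeasurableSet B → MeasurableSet C → Disjoint B C → μ B = μ C →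
      ∫ ω in B, Z ω ∂μ = ∫ ω in C, Z ω ∂μ) :
    Z =ᵐ[μ.restrict A] fun _ => ⨍ ω in A, Z ω ∂μ := by
  set c := ⨍ ω in A, Z ω ∂μ
  have hint : IntegrableOn (fun ω => Z ω - c) A μ :=
    hZ.sub (integrableOn_const (measure_ne_top μ A))
  have hmean : ∫ ω in A, (Z ω - c) ∂μ = 0 := integral_sub_average _ _
  suffices (fun ω => Z ω - c) =ᵐ[μ.restrict A] 0 from this.mono fun ω hω => sub_eq_zero.1 hω
  rcases hμ.ae_le_or_ae_ge_of_setIntegral_eq hA hZm hZ H c with hge | hle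
  · exact (integral_eq_zero_iff_of_nonneg_ae (hge.mono fun ω hω => sub_nonneg.2 hω) hint).1 hmean
  · have hneg := (integral_eq_zero_iff_of_nonneg_ae (f := -fun ω => Z ω - c)
      (hle.mono fun ω hω => by simpa using hω) hint.neg).1 (by rw [integral_neg', hmean, neg_zero])
    exact hneg.mono fun ω hω => neg_eq_zero.1 hω

end Measure.IsAtomless

lemma Measure.map_eq_map_of_swap {α : Type*} [MeasurableSpace α] {f g : Ω → α}
    (hf : Measurable f) (hg : Measurable g) {B C : Set Ω} (hB : MeasurableSet B)
    (hC : MeasurableSet C) (hd : Disjoint B C) (hBC : μ B = μ C) {x y : α}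
    (hfB : f =ᵐ[μ.restrict B] fun _ => x) (hfC : f =ᵐ[μ.restrict C] fun _ => y)
    (hgB : g =ᵐ[μ.restrict B] fun _ => y) (hgC : g =ᵐ[μ.restrict C] fun _ => x)
    (hfg : f =ᵐ[μ.restrict (B ∪ C)ᶜ] g) :
    μ.map f = μ.map g := by
  have hsplit : μ = μ.restrict B + μ.restrict C + μ.restrict (B ∪ C)ᶜ := by
    rw [← Measure.restrict_union hd hC, Measure.restrict_add_restrict_compl (hB.union hC)]
  have hconst {h : Ω → α} {S : Set Ω} {z : α} (hh : h =ᵐ[μ.restrict S] fun _ => z) :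
      (μ.restrict S).map h = μ S • Measure.dirac z := by
    rw [Measure.map_congr hh, Measure.map_const, Measure.restrict_apply_univ]
  rw [hsplit, Measure.map_add _ _ hf, Measure.map_add _ _ hf, Measure.map_add _ _ hg,
    Measure.map_add _ _ hg, hconst hfB, hconst hfC, hconst hgB, hconst hgC,
    Measure.map_congr hfg, hBC, add_comm (μ C • Measure.dirac y)]

lemma integral_mul_indicator_sub_indicator {g : Ω → ℝ} (hg : Integrable g μ) {B C : Set Ω}
    (hB : MeasurableSet B) (hC : MeasurableSet C) :
    ∫ ω, g ω * (B.indicator 1 ω - C.indicator 1 ω) ∂μ = ∫ ω in B, g ω ∂μ - ∫ ω in C, g ω ∂μ := by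
  simp_rw [mul_sub, ← Set.indicator_mul_right, Pi.one_apply, mul_one]
  rw [integral_sub (hg.indicator hB) (hg.indicator hC), integral_indicator hB,
    integral_indicator hC]

variable {p : ℝ≥0∞}

def LawInvariant (F : Lp ℝ p μ → ℝ) : Prop :=
  ∀ ζ ζ' : Lp ℝ p μ, μ.map ζ = μ.map ζ' → F ζ = F ζ'

lemma integral_mul_eq_zero_of_apply_add_smul_eq {F : Lp ℝ p μ → ℝ} {ζ η : Lp ℝ p μ}
    {g : Ω → ℝ} (hdiff : ∀ η : Lp ℝ p μ,
      Tendsto (fun ε : ℝ => (F (ζ + ε • η) - F ζ) / ε) (𝓝[≠] 0) (𝓝 (∫ ω, g ω * η ω ∂μ)))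
    (hsymm : ∀ ε : ℝ, F (ζ + ε • η) = F (ζ + (-ε) • η)) :
    ∫ ω, g ω * η ω ∂μ = 0 := by
  have hneg : ∫ ω, g ω * (-η) ω ∂μ = -∫ ω, g ω * η ω ∂μ := by
    rw [← integral_neg]
    refine integral_congr_ae ?_
    filter_upwards [Lp.coeFn_neg η] with ω hω
    rw [hω, Pi.neg_apply, mul_neg]
  have hlim := hdiff (-η)
  simp_rw [smul_neg, ← neg_smul, ← hsymm] at hlim
  linarith [tendsto_nhds_unique hlim (hdiff η)]

theorem LawInvariant.apply_add_smul_eq {F : Lp ℝ p μ → ℝ} (hF : LawInvariant F)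
    {ζ η : Lp ℝ p μ} {B C : Set Ω} (hB : MeasurableSet B) (hC : MeasurableSet C)
    (hd : Disjoint B C) (hBC : μ B = μ C) {a : ℝ} (hζB : ζ =ᵐ[μ.restrict B] fun _ => a)
    (hζC : ζ =ᵐ[μ.restrict C] fun _ => a)
    (hη : η =ᵐ[μ] fun ω => B.indicator 1 ω - C.indicator 1 ω) (ε : ℝ) :
    F (ζ + ε • η) = F (ζ + (-ε) • η) := by
  set h : Ω → ℝ := fun ω => B.indicator 1 ω - C.indicator 1 ω
  have hperturb (c : ℝ) : ζ + c • η =ᵐ[μ] fun ω => ζ ω + c * h ω := by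
    filter_upwards [Lp.coeFn_add ζ (c • η), Lp.coeFn_smul c η, hη] with ω h₁ h₂ h₃
    rw [h₁, Pi.add_apply, h₂, Pi.smul_apply, h₃, smul_eq_mul]
  have hmeas (c : ℝ) : Measurable fun ω => ζ ω + c * h ω :=
    (Lp.stronglyMeasurable ζ).measurable.add
      (((measurable_one.indicator hB).sub (measurable_one.indicator hC)).const_mul c)
  have hB' (c : ℝ) : (fun ω => ζ ω + c * h ω) =ᵐ[μ.restrict B] fun _ => a + c := by
    filter_upwards [ae_restrict_mem hB, hζB] with ω hω hζω
    simp [h, hζω, hω, disjoint_left.1 hd hω]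
  have hC' (c : ℝ) : (fun ω => ζ ω + c * h ω) =ᵐ[μ.restrict C] fun _ => a - c := by
    filter_upwards [ae_restrict_mem hC, hζC] with ω hω hζω
    simp [h, hζω, hω, disjoint_right.1 hd hω, sub_eq_add_neg]
  have hout : (fun ω => ζ ω + ε * h ω) =ᵐ[μ.restrict (B ∪ C)ᶜ] fun ω => ζ ω + (-ε) * h ω := by
    filter_upwards [ae_restrict_mem (hB.union hC).compl] with ω hω
    simp_all [h]
  -- The two perturbations only exchange the values `a + ε` and `a - ε` taken on `B` and `C`.
  refine hF _ _ ?_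
  rw [Measure.map_congr (hperturb ε), Measure.map_congr (hperturb (-ε))]
  refine Measure.map_eq_map_of_swap (hmeas ε) (hmeas (-ε)) hB hC hd hBC (hB' ε) (hC' ε) ?_ ?_ hout
  · simpa [sub_eq_add_neg] using hB' (-ε)
  · simpa using hC' (-ε)

theorem LawInvariant.setIntegral_eq [IsFiniteMeasure μ] {F : Lp ℝ p μ → ℝ} (hF : LawInvariant F)
    {ζ : Lp ℝ p μ} {g : Ω → ℝ} (hg : Integrable g μ)
    (hdiff : ∀ η : Lp ℝ p μ,
      Tendsto (fun ε : ℝ => (F (ζ + ε • η) - F ζ) / ε) (𝓝[≠] 0) (𝓝 (∫ ω, g ω * η ω ∂μ)))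
    {B C : Set Ω} (hB : MeasurableSet B) (hC : MeasurableSet C) (hd : Disjoint B C)
    (hBC : μ B = μ C) {a : ℝ} (hζB : ζ =ᵐ[μ.restrict B] fun _ => a)
    (hζC : ζ =ᵐ[μ.restrict C] fun _ => a) :
    ∫ ω in B, g ω ∂μ = ∫ ω in C, g ω ∂μ := by
  set η : Lp ℝ p μ := indicatorConstLp p hB (measure_ne_top μ B) 1 -
    indicatorConstLp p hC (measure_ne_top μ C) 1
  have hη : η =ᵐ[μ] fun ω => B.indicator 1 ω - C.indicator 1 ω := by
    filter_upwards [Lp.coeFn_sub (indicatorConstLp p hB (measure_ne_top μ B) (1 : ℝ))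
      (indicatorConstLp p hC (measure_ne_top μ C) 1), indicatorConstLp_coeFn (hs := hB)
      (hμs := measure_ne_top μ B) (c := (1 : ℝ)) (p := p), indicatorConstLp_coeFn (hs := hC)
      (hμs := measure_ne_top μ C) (c := (1 : ℝ)) (p := p)] with ω h₁ h₂ h₃
    rw [h₁, Pi.sub_apply, h₂, h₃]
    rfl
  have hzero := integral_mul_eq_zero_of_apply_add_smul_eq hdiff
    (hF.apply_add_smul_eq hB hC hd hBC hζB hζC hη)
  rw [integral_congr_ae (hη.mono fun ω hω => by rw [hω]),
    integral_mul_indicator_sub_indicator hg hB hC] at hzero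
  linarith

theorem aestronglyMeasurable_of_ae_eq_const_on_fibers {m : MeasurableSpace Ω} {ι : Type*}
    [Countable ι] [MeasurableSpace ι] [MeasurableSingletonClass ι] {f : Ω → ι}
    (hf : Measurable[m] f) (hm : m ≤ mΩ) {Z : Ω → ℝ}
    (hZ : ∀ i, ∃ c : ℝ, Z =ᵐ[μ.restrict (f ⁻¹' {i})] fun _ => c) :
    AEStronglyMeasurable[m] Z μ := by
  choose c hc using hZ
  refine ⟨c ∘ f, ((measurable_of_countable c).comp hf).stronglyMeasurable, ?_⟩
  have hfibers : ∀ᵐ ω ∂μ, ∀ i, f ω = i → Z ω = c i :=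
    ae_all_iff.2 fun i => (ae_restrict_iff' (hm _ (hf (measurableSet_singleton i)))).1 (hc i)
  filter_upwards [hfibers] with ω hω using hω (f ω) rfl

theorem Measure.IsAtomless.ae_eq_setAverage_of_lawInvariant [IsFiniteMeasure μ]
    (hμ : μ.IsAtomless) {F : Lp ℝ p μ → ℝ} (hF : LawInvariant F) {ζ : Lp ℝ p μ} {g : Ω → ℝ}
    (hgm : Measurable g) (hg : Integrable g μ)
    (hdiff : ∀ η : Lp ℝ p μ,
      Tendsto (fun ε : ℝ => (F (ζ + ε • η) - F ζ) / ε) (𝓝[≠] 0) (𝓝 (∫ ω, g ω * η ω ∂μ)))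
    {A : Set Ω} (hA : MeasurableSet A) {a : ℝ} (hζA : ζ =ᵐ[μ.restrict A] fun _ => a) :
    g =ᵐ[μ.restrict A] fun _ => ⨍ ω in A, g ω ∂μ :=
  hμ.ae_eq_setAverage_of_setIntegral_eq hA hgm hg.integrableOn
    fun _ hBA _ hCA hB hC hd hBC => hF.setIntegral_eq hg hdiff hB hC hd hBC
      (ae_restrict_of_ae_restrict_of_subset hBA hζA) (ae_restrict_of_ae_restrict_of_subset hCA hζA)

theorem Measure.IsAtomless.aestronglyMeasurable_of_lawInvariant [IsFiniteMeasure μ]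
    (hμ : μ.IsAtomless) {F : Lp ℝ p μ → ℝ} (hF : LawInvariant F) {ζ : Lp ℝ p μ} {g : Ω → ℝ}
    (hgm : Measurable g) (hg : Integrable g μ)
    (hdiff : ∀ η : Lp ℝ p μ,
      Tendsto (fun ε : ℝ => (F (ζ + ε • η) - F ζ) / ε) (𝓝[≠] 0) (𝓝 (∫ ω, g ω * η ω ∂μ)))
    {m : MeasurableSpace Ω} (hm : m ≤ mΩ) {ι : Type*} [Countable ι] [MeasurableSpace ι]
    [MeasurableSingletonClass ι] {f : Ω → ι} (hf : Measurable[m] f) {ψ : ι → ℝ}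
    (hζ : ζ =ᵐ[μ] ψ ∘ f) :
    AEStronglyMeasurable[m] g μ := by
  refine aestronglyMeasurable_of_ae_eq_const_on_fibers hf hm fun i => ?_
  have hfiber : MeasurableSet[mΩ] (f ⁻¹' {i}) := hm _ (hf (measurableSet_singleton i))
  refine ⟨_, hμ.ae_eq_setAverage_of_lawInvariant hF hgm hg hdiff hfiber (a := ψ i) ?_⟩
  filter_upwards [ae_restrict_mem hfiber, ae_restrict_of_ae hζ] with ω hω hζω
  rw [hζω, Function.comp_apply, hω]

theorem Lp.exists_ae_eq_comp_of_abs_sub_le [IsProbabilityMeasure μ]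
    (ξ : Lp ℝ p μ) {φ : ℝ → ℝ} (hφ : Measurable φ) {δ : ℝ} (hφδ : ∀ x, |φ x - x| ≤ δ) :
    ∃ ζ : Lp ℝ p μ, ζ =ᵐ[μ] φ ∘ ξ ∧ ‖ζ - ξ‖ ≤ δ := by
  have hδ : 0 ≤ δ := (abs_nonneg _).trans (hφδ 0)
  have hbound : ∀ᵐ ω ∂μ, ‖φ (ξ ω) - ξ ω‖ ≤ δ := ae_of_all _ fun ω => hφδ (ξ ω)
  have hmem : MemLp (fun ω => φ (ξ ω) - ξ ω) p μ :=
    .of_bound ((hφ.comp (Lp.stronglyMeasurable ξ).measurable).sub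
      (Lp.stronglyMeasurable ξ).measurable).aestronglyMeasurable δ hbound
  refine ⟨ξ + hmem.toLp _, ?_, ?_⟩
  · filter_upwards [Lp.coeFn_add ξ (hmem.toLp _), hmem.coeFn_toLp] with ω h₁ h₂
    rw [h₁, Pi.add_apply, h₂, add_sub_cancel, Function.comp_apply]
  · rw [add_sub_cancel_left]
    refine (Lp.norm_le_of_ae_bound hδ ?_).trans_eq (by simp [measureUnivNNReal])
    filter_upwards [hmem.coeFn_toLp] with ω hω
    rw [hω]
    exact hφδ (ξ ω)

end MeasureTheory

/-- The gradient `DF(ξ)` of a law-invariant, continuously Fréchet differentiable `F` is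
measurable with respect to `σ(ξ)` up to null sets: `E[DF(ξ) | σ(ξ)] = DF(ξ)` a.s. -/
theorem wasserstein_derivative_sigma_measurable
    {Ω : Type*} [MeasurableSpace Ω] (μ : Measure Ω) [IsProbabilityMeasure μ]
    (hatomless : ∀ s : Set Ω, MeasurableSet s → 0 < μ s →
      ∃ t ⊆ s, MeasurableSet t ∧ 0 < μ t ∧ μ t < μ s)
    (F : Lp ℝ 2 μ → ℝ)
    (hlaw : ∀ ζ ζ' : Lp ℝ 2 μ, Measure.map (ζ : Ω → ℝ) μ = Measure.map (ζ' : Ω → ℝ) μ →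
      F ζ = F ζ')
    (DF : Lp ℝ 2 μ → Lp ℝ 2 μ)
    (hdiff : ∀ ζ η : Lp ℝ 2 μ,
      Tendsto (fun ε : ℝ => (F (ζ + ε • η) - F ζ) / ε) (𝓝[≠] 0)
        (𝓝 (∫ ω, DF ζ ω * η ω ∂μ)))
    (hcont : Continuous DF)
    (ξ : Lp ℝ 2 μ) :
    μ[(DF ξ : Ω → ℝ) | MeasurableSpace.comap (ξ : Ω → ℝ) Real.measurableSpace]
      =ᵐ[μ] DF ξ := by
  set m := MeasurableSpace.comap (ξ : Ω → ℝ) Real.measurableSpace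
  have hm := (Lp.stronglyMeasurable ξ).measurable.comap_le
  choose ζ hζ hζξ using fun n : ℕ => Lp.exists_ae_eq_comp_of_abs_sub_le ξ (by fun_prop)
    fun x => abs_floor_mul_div_sub_le x (n.cast_add_one_pos : (0 : ℝ) < n + 1)
  have hζ_lim : Tendsto ζ atTop (𝓝 ξ) := by
    refine tendsto_iff_norm_sub_tendsto_zero.2 (squeeze_zero (fun _ => norm_nonneg _) hζξ ?_)
    simpa [one_div] using tendsto_one_div_add_atTop_nhds_zero_nat (𝕜 := ℝ)
  have hgrad (n : ℕ) : AEStronglyMeasurable[m] (DF (ζ n)) μ :=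
    Measure.IsAtomless.aestronglyMeasurable_of_lawInvariant hatomless hlaw
      (Lp.stronglyMeasurable _).measurable ((Lp.memLp _).integrable one_le_two) (hdiff (ζ n)) hm
      (f := fun ω => ⌊ξ ω * (n + 1)⌋) ((comap_measurable _).mul_const _).floor
      (ψ := fun k => k / (n + 1)) (hζ n)
  have hgradξ : DF ξ ∈ {f : Lp ℝ 2 μ | AEStronglyMeasurable[m] f μ} :=
    (isClosed_aestronglyMeasurable hm).mem_of_tendsto ((hcont.tendsto ξ).comp hζ_lim)
      (Eventually.of_forall hgrad)
  have := isFiniteMeasure_trim (μ := μ) hm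
  exact condExp_of_aestronglyMeasurable' hm hgradξ ((Lp.memLp _).integrable one_le_two)
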